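/- Let D be a Dedekind domain that is not a field, O an order in D, and f the conductor of O in D. If h ∈ Cl(D) is a class containing some nonzero prime ideal of D coprime to f, then there exists a prime ideal p of O coprime to f (hence invertible as a fractional ideal of O) such that the class of p·D in Cl(D) equals h. In particular, the number of classes of Cl(D) containing a nonzero prime ideal coprime to f is at most the number of classes of Cl(O) containing an invertible prime ideal coprime to f. -/

import Mathlib

/-!
Let `P` be a nonzero prime of `D` with `P + f = D`, say `1 = x + y` with `x ∈ P`, `y ∈ f`.
Then `p = P ∩ O` is a prime of `O` with `p + f = O`, and `p D = P` because every `z ∈ P` is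
`x z + y z` with `y z ∈ P ∩ O`. The ideal `p` is invertible in `O`: for `N = f P⁻¹` we have
`p N ⊆ P N = f ⊆ O`, so `N ⊆ p⁻¹`, and `f = P N = p N` since `N` is a `D`-module; hence
`1 ∈ p + f ⊆ p p⁻¹`. Extension of ideals along `O ⊆ D` preserves principality, so the class of
`p` in `Cl(O)` determines the class of `P` in `Cl(D)`, which gives the cardinality bound.
-/

open scoped nonZeroDivisors

/-- The conductor `f = {a ∈ D | a·D ⊆ O}` of a subring `O` of `D`, as an ideal of `D`. -/
def conductorIdeal {D : Type*} [CommRing D] (O : Subring D) : Ideal D where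
  carrier := {a | ∀ d : D, a * d ∈ O}
  add_mem' := by
    intro a b ha hb d
    simpa [add_mul] using O.add_mem (ha d) (hb d)
  zero_mem' := by
    intro d
    simpa using O.zero_mem
  smul_mem' := by
    intro c a ha d
    have h := ha (c * d)
    have e : c • a * d = a * (c * d) := by rw [smul_eq_mul]; ring
    rw [e]; exact h

/-- The conductor of the subring `O` of `D`, viewed as an ideal of `O`
(the conductor is contained in `O`). -/
def conductorIdealO {D : Type*} [CommRing D] (O : Subring D) : Ideal O :=
  (conductorIdeal O).comap O.subtype

/-- `O` is an order in the Dedekind domain `D`: a subring such that the fraction field of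
`D` is also a fraction field of `O` (every element is a quotient of two elements of `O`)
and such that `D` is a finitely generated `O`-module. -/
def Subring.IsOrder {D : Type*} [CommRing D] [IsDomain D] (O : Subring D) : Prop :=
  (∀ x : FractionRing D, ∃ a b : O,
      b ≠ 0 ∧ x = algebraMap D (FractionRing D) a / algebraMap D (FractionRing D) b) ∧
    Module.Finite O D

open FractionalIdeal

theorem Ideal.smul_eq_coeSubmodule_mul {S A : Type*} [CommRing S] [CommRing A] [Algebra S A]
    (J : Ideal S) (N : Submodule S A) : J • N = IsLocalization.coeSubmodule A J * N := by
  apply le_antisymm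
  · refine Submodule.smul_le.mpr fun r hr n hn => ?_
    rw [Algebra.smul_def]
    exact Submodule.mul_mem_mul (Submodule.mem_map_of_mem hr) hn
  · refine Submodule.mul_le.mpr ?_
    rintro _ ⟨r, hr, rfl⟩ n hn
    rw [Algebra.linearMap_apply, ← Algebra.smul_def]
    exact Submodule.smul_mem_smul hr hn

theorem ClassGroup.mk0_map_eq_mk0_map_of_mk_eq {R S : Type*} [CommRing R] [IsDomain R]
    [CommRing S] [IsDedekindDomain S] [Algebra R S] [FaithfulSMul R S] {p q : Ideal R}
    {hp : IsUnit (p : FractionalIdeal R⁰ (FractionRing R))}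
    {hq : IsUnit (q : FractionalIdeal R⁰ (FractionRing R))}
    (hpq : ClassGroup.mk (FractionRing R) hp.unit = ClassGroup.mk (FractionRing R) hq.unit)
    (hpS : p.map (algebraMap R S) ∈ (Ideal S)⁰) (hqS : q.map (algebraMap R S) ∈ (Ideal S)⁰) :
    ClassGroup.mk0 ⟨p.map (algebraMap R S), hpS⟩ =
      ClassGroup.mk0 ⟨q.map (algebraMap R S), hqS⟩ := by
  obtain ⟨x, y, hx, hy, hxy⟩ := (ClassGroup.mk_eq_mk_of_coe_ideal hp.unit_spec hq.unit_spec).mp hpq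
  have hinj := FaithfulSMul.algebraMap_injective R S
  refine ClassGroup.mk0_eq_mk0_iff.mpr ⟨algebraMap R S x, algebraMap R S y,
    (map_ne_zero_iff _ hinj).mpr hx, (map_ne_zero_iff _ hinj).mpr hy, ?_⟩
  simpa only [Ideal.map_mul, Ideal.map_span, Set.image_singleton] using
    congrArg (Ideal.map (algebraMap R S)) hxy

section Conductor

variable {D : Type*} [CommRing D] {O : Subring D}

theorem mem_of_mem_conductorIdeal {a : D} (h : a ∈ conductorIdeal O) : a ∈ O := by
  simpa using h 1

theorem Subring.IsOrder.isFractionRing [IsDomain D] (hO : O.IsOrder) :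
    IsFractionRing O (FractionRing D) :=
  have : FaithfulSMul O (FractionRing D) := (faithfulSMul_iff_algebraMap_injective _ _).mpr
    ((IsFractionRing.injective D (FractionRing D)).comp Subtype.val_injective)
  IsFractionRing.of_field _ _ fun z => by
    obtain ⟨a, b, -, rfl⟩ := hO.1 z
    exact ⟨a, b, rfl⟩

theorem comap_subtype_sup_conductorIdealO_eq_top {I : Ideal D}
    (h : I ⊔ conductorIdeal O = ⊤) : I.comap O.subtype ⊔ conductorIdealO O = ⊤ := by
  obtain ⟨x, hx, y, hy, hxy⟩ := Submodule.mem_sup.mp (h ▸ Submodule.mem_top : (1 : D) ∈ _)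
  have hyO := mem_of_mem_conductorIdeal hy
  have hxO : x ∈ O := eq_sub_of_add_eq hxy ▸ O.sub_mem O.one_mem hyO
  exact (Ideal.eq_top_iff_one _).mpr
    (Submodule.mem_sup.mpr ⟨⟨x, hxO⟩, hx, ⟨y, hyO⟩, hy, Subtype.ext hxy⟩)

theorem map_comap_subtype_eq_of_sup_conductorIdeal_eq_top {I : Ideal D}
    (h : I ⊔ conductorIdeal O = ⊤) : (I.comap O.subtype).map O.subtype = I := by
  refine le_antisymm Ideal.map_comap_le fun z hz => ?_
  obtain ⟨x, hx, y, hy, hxy⟩ := Submodule.mem_sup.mp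
    (comap_subtype_sup_conductorIdealO_eq_top h ▸ Submodule.mem_top : (1 : O) ∈ _)
  have hxz : (x : D) * z ∈ (I.comap O.subtype).map O.subtype :=
    Ideal.mul_mem_right z _ (Ideal.mem_map_of_mem O.subtype hx)
  have hyz : (y : D) * z ∈ (I.comap O.subtype).map O.subtype :=
    Ideal.mem_map_of_mem O.subtype (x := ⟨y * z, hy z⟩) (I.mul_mem_left _ hz)
  have hz : z = x * z + y * z := by
    rw [← add_mul, ← Subring.coe_add, hxy, Subring.coe_one, one_mul]
  exact hz ▸ Ideal.add_mem _ hxz hyz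

theorem isUnit_coeIdeal_of_sup_conductorIdealO_eq_top [IsDomain D] {K : Type*} [Field K]
    [Algebra D K] [IsFractionRing D K] [Algebra O K] [IsScalarTower O D K] [IsFractionRing O K]
    {p : Ideal O} (hp : p ⊔ conductorIdealO O = ⊤)
    (hP : IsUnit ((p.map O.subtype : Ideal D) : FractionalIdeal D⁰ K)) :
    IsUnit (p : FractionalIdeal O⁰ K) := by
  have hp0 : (p : FractionalIdeal O⁰ K) ≠ 0 := by
    rintro hp0
    rw [coeIdeal_eq_zero.mp hp0, Ideal.map_bot, coeIdeal_bot] at hP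
    exact not_isUnit_zero hP
  set P : FractionalIdeal D⁰ K := ↑(p.map O.subtype)
  set f : FractionalIdeal D⁰ K := ↑(conductorIdeal O)
  set N : FractionalIdeal D⁰ K := f * ↑hP.unit⁻¹
  have hPN : P * N = f := by rw [mul_left_comm, hP.mul_val_inv, mul_one]
  have hN : (N : Submodule D K).restrictScalars O ≤ ((p : FractionalIdeal O⁰ K)⁻¹ : _) := by
    intro n hn
    refine mem_coe.mpr ((mem_inv_iff hp0).mpr fun y hy => ?_)
    obtain ⟨a, ha, rfl⟩ := (mem_coeIdeal _).mp hy
    have hany : algebraMap O K a * n ∈ f := hPN ▸ mul_mem_mul ((mem_coeIdeal _).mpr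
      ⟨a, Ideal.mem_map_of_mem _ ha, (IsScalarTower.algebraMap_apply O D K a).symm⟩) hn
    obtain ⟨b, hb, hba⟩ := (mem_coeIdeal _).mp hany
    refine (mem_one_iff _).mpr ⟨⟨b, mem_of_mem_conductorIdeal hb⟩, ?_⟩
    rw [IsScalarTower.algebraMap_apply O D K, mul_comm n]
    exact hba
  have hf : (f : Submodule D K).restrictScalars O ≤
      IsLocalization.coeSubmodule K p * ↑(p : FractionalIdeal O⁰ K)⁻¹ :=
    calc (f : Submodule D K).restrictScalars O
        = (p.map (algebraMap O D) • (N : Submodule D K)).restrictScalars O := by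
          rw [← hPN, coe_mul, Ideal.smul_eq_coeSubmodule_mul, coe_coeIdeal]; rfl
      _ = IsLocalization.coeSubmodule K p * (N : Submodule D K).restrictScalars O := by
          rw [Ideal.smul_restrictScalars, Ideal.smul_eq_coeSubmodule_mul]
      _ ≤ _ := mul_le_mul_right hN _
  rw [← mul_inv_cancel_iff_isUnit]
  refine le_antisymm mul_one_div_le_one (one_le.mpr ?_)
  obtain ⟨u, hu, v, hv, huv⟩ := Submodule.mem_sup.mp (hp ▸ Submodule.mem_top : (1 : O) ∈ _)
  have hu' : algebraMap O K u ∈ (↑((p : FractionalIdeal O⁰ K) * (↑p)⁻¹) : Submodule O K) :=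
    coe_ideal_le_self_mul_inv K p ((mem_coeIdeal _).mpr ⟨u, hu, rfl⟩)
  have hv' : algebraMap O K v ∈ (↑((p : FractionalIdeal O⁰ K) * (↑p)⁻¹) : Submodule O K) := by
    rw [coe_mul, coe_coeIdeal]
    exact hf ((mem_coeIdeal D⁰).mpr ⟨v, hv, (IsScalarTower.algebraMap_apply O D K v).symm⟩)
  simpa only [← map_add, huv, map_one, mem_coe] using Submodule.add_mem _ hu' hv'

theorem isUnit_coeIdeal_comap_subtype_of_sup_conductorIdeal_eq_top [IsDedekindDomain D]
    (hO : O.IsOrder) {P : Ideal D} (hP0 : P ≠ ⊥) (hPf : P ⊔ conductorIdeal O = ⊤) :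
    IsUnit ((P.comap O.subtype : Ideal O) : FractionalIdeal O⁰ (FractionRing O)) := by
  have := hO.isFractionRing
  have hP : IsUnit (P : FractionalIdeal D⁰ (FractionRing D)) :=
    isUnit_iff_ne_zero.mpr (coeIdeal_ne_zero.mpr hP0)
  rw [← map_comap_subtype_eq_of_sup_conductorIdeal_eq_top hPf] at hP
  have hunit := isUnit_coeIdeal_of_sup_conductorIdealO_eq_top
    (comap_subtype_sup_conductorIdealO_eq_top hPf) hP
  simpa only [canonicalEquiv_coeIdeal] using
    hunit.map (canonicalEquiv O⁰ (FractionRing D) (FractionRing O))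

end Conductor

theorem class_surjectivity_primes_coprime_conductor_general {D : Type*} [CommRing D]
    [IsDedekindDomain D] (O : Subring D) (hO : O.IsOrder) :
    (∀ h : ClassGroup D,
      (∃ P : (Ideal D)⁰, (P : Ideal D).IsPrime ∧ (P : Ideal D) ⊔ conductorIdeal O = ⊤ ∧
        ClassGroup.mk0 P = h) →
      (∃ p : Ideal O, p.IsPrime ∧ p ⊔ conductorIdealO O = ⊤ ∧
        IsUnit ((p : Ideal O) : FractionalIdeal (↥O)⁰ (FractionRing ↥O)) ∧
        ∃ hm : p.map O.subtype ∈ (Ideal D)⁰,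
          ClassGroup.mk0 ⟨p.map O.subtype, hm⟩ = h)) ∧
    Cardinal.mk {h : ClassGroup D |
        ∃ P : (Ideal D)⁰, (P : Ideal D).IsPrime ∧ (P : Ideal D) ⊔ conductorIdeal O = ⊤ ∧
          ClassGroup.mk0 P = h} ≤
      Cardinal.mk {g : ClassGroup O |
        ∃ p : Ideal O, p.IsPrime ∧ p ⊔ conductorIdealO O = ⊤ ∧
          ∃ hp : IsUnit ((p : Ideal O) : FractionalIdeal (↥O)⁰ (FractionRing ↥O)),
            ClassGroup.mk (FractionRing ↥O) hp.unit = g} := by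
  refine (fun lift ↦ ⟨lift, ?card⟩) fun h ⟨P, hP, hPf, hPh⟩ ↦ ?lift
  case lift =>
    have hmap := map_comap_subtype_eq_of_sup_conductorIdeal_eq_top hPf
    refine ⟨_, hP.comap _, comap_subtype_sup_conductorIdealO_eq_top hPf,
      isUnit_coeIdeal_comap_subtype_of_sup_conductorIdeal_eq_top hO
        (nonZeroDivisors.coe_ne_zero P) hPf, hmap.symm ▸ P.2, ?_⟩
    simp only [hmap, hPh]
  case card =>
    choose p hprime hcop hunit hm hclass using lift
    refine Cardinal.mk_le_of_injective (f := fun h => ⟨ClassGroup.mk _ (hunit h h.2).unit,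
      p h h.2, hprime h h.2, hcop h h.2, hunit h h.2, rfl⟩) ?_
    rintro ⟨a, ha⟩ ⟨b, hb⟩ hab
    exact Subtype.ext <| (hclass a ha).symm.trans <|
      (ClassGroup.mk0_map_eq_mk0_map_of_mk_eq (congrArg Subtype.val hab) _ _).trans (hclass b hb)

/-- **Lemma 4.1(1).** If a class `h ∈ Cl(D)` contains a nonzero prime ideal of `D` coprime
to the conductor `f` of an order `O ⊆ D`, then there is a prime ideal `p` of `O` coprime to
`f` (hence invertible as a fractional ideal of `O`) whose extension `p·D` has class `h`.
In particular, the number of classes of `Cl(D)` containing a nonzero prime ideal coprime to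
`f` is at most the number of classes of `Cl(O)` containing an invertible prime ideal coprime
to `f`. -/
theorem class_surjectivity_primes_coprime_conductor {D : Type*} [CommRing D]
    [IsDedekindDomain D] (hD : ¬ IsField D) (O : Subring D) (hO : O.IsOrder) :
    (∀ h : ClassGroup D,
      (∃ P : (Ideal D)⁰, (P : Ideal D).IsPrime ∧ (P : Ideal D) ⊔ conductorIdeal O = ⊤ ∧
        ClassGroup.mk0 P = h) →
      (∃ p : Ideal O, p.IsPrime ∧ p ⊔ conductorIdealO O = ⊤ ∧
        IsUnit ((p : Ideal O) : FractionalIdeal (↥O)⁰ (FractionRing ↥O)) ∧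
        ∃ hm : p.map O.subtype ∈ (Ideal D)⁰,
          ClassGroup.mk0 ⟨p.map O.subtype, hm⟩ = h)) ∧
    Cardinal.mk {h : ClassGroup D |
        ∃ P : (Ideal D)⁰, (P : Ideal D).IsPrime ∧ (P : Ideal D) ⊔ conductorIdeal O = ⊤ ∧
          ClassGroup.mk0 P = h} ≤
      Cardinal.mk {g : ClassGroup O |
        ∃ p : Ideal O, p.IsPrime ∧ p ⊔ conductorIdealO O = ⊤ ∧
          ∃ hp : IsUnit ((p : Ideal O) : FractionalIdeal (↥O)⁰ (FractionRing ↥O)),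
            ClassGroup.mk (FractionRing ↥O) hp.unit = g} :=
  class_surjectivity_primes_coprime_conductor_general O hO
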